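/- Fix m ≥ 2 mean times between false alarms 1 ≤ τ_1 < ⋯ < τ_m, c_F > 0, and attacker types φ = 1,…,n_φ with priors π_φ ≥ 0 summing to 1, where for each type φ the payoffs satisfy either 0 < I_1^φ < I_2^φ < ⋯ < I_m^φ or I_j^φ = 0 for all j. Then a moving target defense exists — i.e., there exists a Bayesian Nash equilibrium (p*, q*_1, …, q*_{n_φ}) in which every entry of p* is strictly less than 1 — if, and only if, c_F/τ_{m−1} ≤ c_F/τ_m + Σ_{φ=1}^{n_φ} π_φ I_m^φ. -/

import Mathlib

/-!
Apart from the false-alarm term, which depends on the defender alone, every attacker type plays a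
zero-sum game against the defender, so the defender's prior-averaged cost is a bilinear function
of the defender's and the attackers' mixed strategies. The minimax theorem gives a saddle point of
it, and a saddle point is a Bayesian Nash equilibrium once the types of prior zero are made to play
a best response.

Necessity: in an equilibrium `p` the defender does no better than always switching at `τ_m`, which
costs at most `c_F/τ_m + Σ π_φ I_m^φ`, each type gains at least `I_m^φ p_m` by attacking at `τ_m`,
and the false-alarm cost of `p` is at least `p_m c_F/τ_m + (1 - p_m) c_F/τ_{m-1}`. Comparing and
dividing by `1 - p_m > 0` gives the inequality.

Sufficiency: a saddle-point strategy that is pure at some `τ_i` with `i < m` is impossible: moving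
a small mass `s` to `τ_m` lowers the false-alarm cost while no attack gains more than `I_i^φ`. If
it is pure at `τ_m`, play `τ_{m-1}` with a small probability `1 - s` instead; every attack then
gains at most `s I_m^φ`, and the inequality says exactly that the worst-case cost does not
increase, so this mixture is again a saddle-point strategy, and a moving target defense.
-/

open Matrix BigOperators

/-- A (mixed strategy) probability vector: nonnegative entries summing to one. -/
def IsProbVec {m : ℕ} (p : Fin m → ℝ) : Prop := (∀ i, 0 ≤ p i) ∧ ∑ i, p i = 1

/-- Defender cost matrix `Ω(φ)_{i,j} = c_F/τ_i + 1{j ≤ i}·I_j^φ`. -/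
noncomputable def OmegaMat {m nφ : ℕ} (τ : Fin m → ℝ) (cF : ℝ) (I : Fin nφ → Fin m → ℝ)
    (φ : Fin nφ) : Matrix (Fin m) (Fin m) ℝ :=
  Matrix.of fun i j => cF / τ i + if j ≤ i then I φ j else 0

/-- Attacker payoff matrix `Υ(φ)_{i,j} = 1{j ≤ i}·I_j^φ`. -/
noncomputable def UpsilonMat {m nφ : ℕ} (I : Fin nφ → Fin m → ℝ) (φ : Fin nφ) :
    Matrix (Fin m) (Fin m) ℝ :=
  Matrix.of fun i j => if j ≤ i then I φ j else 0

/-- Bayesian Nash equilibrium of the threshold-switching game: `p` minimizes the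
prior-averaged defender cost against `(q_φ)` and each `q_φ` maximizes the payoff of
attacker type `φ` against `p`. -/
noncomputable def IsBNE {m nφ : ℕ} (τ : Fin m → ℝ) (cF : ℝ) (I : Fin nφ → Fin m → ℝ)
    (π : Fin nφ → ℝ) (p : Fin m → ℝ) (q : Fin nφ → Fin m → ℝ) : Prop :=
  IsProbVec p ∧ (∀ φ, IsProbVec (q φ)) ∧
  (∀ p' : Fin m → ℝ, IsProbVec p' →
    ∑ φ, π φ * (p ⬝ᵥ (OmegaMat τ cF I φ *ᵥ q φ)) ≤
      ∑ φ, π φ * (p' ⬝ᵥ (OmegaMat τ cF I φ *ᵥ q φ))) ∧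
  (∀ φ, ∀ q' : Fin m → ℝ, IsProbVec q' →
    p ⬝ᵥ (UpsilonMat I φ *ᵥ q') ≤ p ⬝ᵥ (UpsilonMat I φ *ᵥ q φ))

open Filter Topology Set

theorem LinearMap.exists_isSaddlePointOn_of_isCompact {E F : Type*}
    [NormedAddCommGroup E] [NormedSpace ℝ E] [FiniteDimensional ℝ E]
    [NormedAddCommGroup F] [NormedSpace ℝ F] [FiniteDimensional ℝ F]
    (B : E →ₗ[ℝ] F →ₗ[ℝ] ℝ) {X : Set E} {Y : Set F}
    (hXne : X.Nonempty) (hXc : Convex ℝ X) (hXk : IsCompact X)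
    (hYne : Y.Nonempty) (hYc : Convex ℝ Y) (hYk : IsCompact Y) :
    ∃ a ∈ X, ∃ b ∈ Y, IsSaddlePointOn X Y (B · ·) a b :=
  Sion.exists_isSaddlePointOn hXne hXc hXk
    (fun y _ =>
      (B.flip y).continuous_of_finiteDimensional.lowerSemicontinuous.lowerSemicontinuousOn X)
    (fun y _ => ((B.flip y).convexOn hXc).quasiconvexOn) hYc hYne hYk
    (fun x _ => (B x).continuous_of_finiteDimensional.upperSemicontinuous.upperSemicontinuousOn Y)
    (fun x _ => ((B x).concaveOn hYc).quasiconcaveOn)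

section Simplex

variable {ι : Type*}

theorem exists_mem_Ioo_mul_le [Finite ι] {u v : ι → ℝ}
    (h : ∀ i, 0 < u i ∨ u i = 0 ∧ v i = 0) : ∃ s ∈ Ioo (0 : ℝ) 1, ∀ i, s * v i ≤ u i := by
  have hev : ∀ᶠ s in 𝓝[>] (0 : ℝ), ∀ i, s * v i ≤ u i := by
    refine eventually_all.2 fun i => ?_
    rcases h i with hu | ⟨hu, hv⟩
    · have : Tendsto (fun s : ℝ => s * v i) (𝓝[>] 0) (𝓝 0) := by
        simpa using ((tendsto_id (x := 𝓝 (0 : ℝ))).mul_const (v i)).mono_left nhdsWithin_le_nhds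
      exact this.eventually (ge_mem_nhds hu)
    · exact Eventually.of_forall fun s => by simp [hu, hv]
  exact (hev.and (Ioo_mem_nhdsGT one_pos)).exists.imp fun s hs => ⟨hs.2, hs.1⟩

theorem exists_mem_Ioo_le_mul [Finite ι] {u v : ι → ℝ}
    (h : ∀ i, u i < v i ∨ u i = 0 ∧ v i = 0) : ∃ s ∈ Ioo (0 : ℝ) 1, ∀ i, u i ≤ s * v i := by
  have hev : ∀ᶠ s in 𝓝[<] (1 : ℝ), ∀ i, u i ≤ s * v i := by
    refine eventually_all.2 fun i => ?_
    rcases h i with huv | ⟨hu, hv⟩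
    · have : Tendsto (fun s : ℝ => s * v i) (𝓝[<] 1) (𝓝 (v i)) := by
        simpa using ((tendsto_id (x := 𝓝 (1 : ℝ))).mul_const (v i)).mono_left nhdsWithin_le_nhds
      exact (this.eventually (lt_mem_nhds huv)).mono fun s hs => hs.le
    · exact Eventually.of_forall fun s => by simp [hu, hv]
  exact (hev.and (Ioo_mem_nhdsLT one_pos)).exists.imp fun s hs => ⟨hs.2, hs.1⟩

theorem dotProduct_le_of_forall_le [Fintype ι] {g q : ι → ℝ} {c : ℝ}
    (hq : q ∈ stdSimplex ℝ ι) (h : ∀ j, g j ≤ c) : g ⬝ᵥ q ≤ c :=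
  calc g ⬝ᵥ q = ∑ j, g j * q j := rfl
    _ ≤ ∑ j, c * q j := Finset.sum_le_sum fun j _ => mul_le_mul_of_nonneg_right (h j) (hq.1 j)
    _ = c := by rw [← Finset.mul_sum, hq.2, mul_one]

theorem add_mul_le_dotProduct [Fintype ι] {p g : ι → ℝ} (hp : p ∈ stdSimplex ℝ ι)
    {b : ι} {c : ℝ} (h : ∀ i ≠ b, c ≤ g i) : p b * g b + (1 - p b) * c ≤ p ⬝ᵥ g := by
  classical
  have hsplit := Finset.add_sum_erase Finset.univ (fun i => p i * (g i - c)) (Finset.mem_univ b)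
  have hrest : 0 ≤ ∑ i ∈ Finset.univ.erase b, p i * (g i - c) :=
    Finset.sum_nonneg fun i hi =>
      mul_nonneg (hp.1 i) (sub_nonneg.2 (h i (Finset.ne_of_mem_erase hi)))
  have hsum : ∑ i, p i * (g i - c) = p ⬝ᵥ g - c := by
    simp only [mul_sub, Finset.sum_sub_distrib, ← Finset.sum_mul, hp.2, one_mul, dotProduct]
  linarith

theorem eq_single_of_mem_stdSimplex [Fintype ι] [DecidableEq ι] {p : ι → ℝ}
    (hp : p ∈ stdSimplex ℝ ι) {i : ι} (hi : 1 ≤ p i) : p = Pi.single i 1 := by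
  have hsplit := Finset.add_sum_erase Finset.univ p (Finset.mem_univ i)
  have hrest : ∑ j ∈ Finset.univ.erase i, p j = 0 :=
    le_antisymm (by linarith [hp.2]) (Finset.sum_nonneg fun j _ => hp.1 j)
  ext j
  rcases eq_or_ne j i with rfl | hj
  · simpa using le_antisymm (mem_Icc_of_mem_stdSimplex hp j).2 hi
  · rw [Pi.single_eq_of_ne hj]
    exact (Finset.sum_eq_zero_iff_of_nonneg fun k _ => hp.1 k).1 hrest j (by simp [hj])

theorem two_point_mem_stdSimplex [DecidableEq ι] [Fintype ι] (i k : ι) {s : ℝ}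
    (hs : s ∈ Icc (0 : ℝ) 1) :
    (1 - s) • Pi.single i 1 + s • Pi.single k 1 ∈ stdSimplex ℝ ι :=
  convex_stdSimplex ℝ ι (single_mem_stdSimplex ℝ i) (single_mem_stdSimplex ℝ k)
    (sub_nonneg.2 hs.2) hs.1 (sub_add_cancel 1 s)

theorem two_point_apply_lt_one [DecidableEq ι] {i k : ι} (hik : i ≠ k) {s : ℝ}
    (hs : s ∈ Ioo (0 : ℝ) 1) (j : ι) :
    ((1 - s) • Pi.single i 1 + s • Pi.single k 1 : ι → ℝ) j < 1 := by
  rcases eq_or_ne j i with rfl | hji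
  · simp [hik, hs.1]
  rcases eq_or_ne j k with rfl | hjk
  · simp [hji, hs.2]
  · simp [hji, hjk]

end Simplex

section Game

variable {m nφ : ℕ}

-- the probability that an attack stealthy for `τ_j` goes undetected
def tailMass (p : Fin m → ℝ) (j : Fin m) : ℝ := ∑ i ∈ Finset.Ici j, p i

theorem tailMass_single (i j : Fin m) : tailMass (Pi.single i 1) j = if j ≤ i then 1 else 0 := by
  simp [tailMass, Pi.single_apply]

theorem tailMass_of_isTop {b : Fin m} (hb : IsTop b) (p : Fin m → ℝ) : tailMass p b = p b := by
  have : Finset.Ici b = {b} := Finset.coe_injective <| by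
    rw [Finset.coe_Ici, Finset.coe_singleton, Set.Ici_eq_singleton_iff_isTop]
    exact hb
  simp [tailMass, this]

theorem mul_tailMass_le_max {f : Fin m → ℝ} (hf : Monotone f) {i k : Fin m} (hk : IsTop k)
    {s : ℝ} (hs : 0 ≤ s) (j : Fin m) :
    f j * tailMass ((1 - s) • Pi.single i 1 + s • Pi.single k 1) j ≤ max (f i) (s * f k) := by
  have : tailMass ((1 - s) • Pi.single i 1 + s • Pi.single k 1) j
      = (1 - s) * tailMass (Pi.single i 1) j + s * tailMass (Pi.single k 1) j := by
    simp only [tailMass, Pi.add_apply, Pi.smul_apply, smul_eq_mul, Finset.sum_add_distrib,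
      ← Finset.mul_sum]
  rw [this, tailMass_single, tailMass_single, if_pos (hk j)]
  split_ifs with hji
  · simpa using le_max_of_le_left (hf hji)
  · simpa [mul_comm] using le_max_of_le_right (mul_le_mul_of_nonneg_left (hf (hk j)) hs)

theorem vecMul_upsilonMat (I : Fin nφ → Fin m → ℝ) (φ : Fin nφ) (p : Fin m → ℝ) :
    p ᵥ* UpsilonMat I φ = fun j => I φ j * tailMass p j := by
  ext j
  simp [vecMul, dotProduct, UpsilonMat, tailMass, Finset.mul_sum, ← Finset.sum_filter,
    Finset.filter_le_eq_Ici, mul_comm]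

theorem dotProduct_omegaMat_mulVec (τ : Fin m → ℝ) (cF : ℝ) (I : Fin nφ → Fin m → ℝ) (φ : Fin nφ)
    (p v : Fin m → ℝ) :
    p ⬝ᵥ (OmegaMat τ cF I φ *ᵥ v) =
      (∑ j, v j) * (p ⬝ᵥ fun i => cF / τ i) + (p ᵥ* UpsilonMat I φ) ⬝ᵥ v := by
  have : OmegaMat τ cF I φ *ᵥ v = (∑ j, v j) • (fun i => cF / τ i) + UpsilonMat I φ *ᵥ v := by
    ext i
    simp only [OmegaMat, UpsilonMat, mulVec, dotProduct, of_apply, Pi.add_apply, Pi.smul_apply,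
      smul_eq_mul, add_mul, Finset.sum_add_distrib, ← Finset.mul_sum]
    ring
  rw [this, dotProduct_add, dotProduct_smul, smul_eq_mul, dotProduct_mulVec]

def attackProfiles (nφ m : ℕ) : Set (Fin nφ → Fin m → ℝ) :=
  Set.univ.pi fun _ => stdSimplex ℝ (Fin m)

theorem mem_attackProfiles {q : Fin nφ → Fin m → ℝ} :
    q ∈ attackProfiles nφ m ↔ ∀ φ, q φ ∈ stdSimplex ℝ (Fin m) := by
  simp [attackProfiles]

theorem const_mem_attackProfiles {r : Fin m → ℝ} (hr : r ∈ stdSimplex ℝ (Fin m)) :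
    (fun _ => r) ∈ attackProfiles nφ m :=
  mem_attackProfiles.2 fun _ => hr

noncomputable def expectedCost (τ : Fin m → ℝ) (cF : ℝ) (I : Fin nφ → Fin m → ℝ) (π : Fin nφ → ℝ) :
    (Fin m → ℝ) →ₗ[ℝ] (Fin nφ → Fin m → ℝ) →ₗ[ℝ] ℝ :=
  ∑ φ, π φ • (toLinearMap₂' ℝ (OmegaMat τ cF I φ)).compl₂ (LinearMap.proj φ)

section ExpectedCost

variable (τ : Fin m → ℝ) (cF : ℝ) (I : Fin nφ → Fin m → ℝ) {π : Fin nφ → ℝ}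

theorem expectedCost_apply (p : Fin m → ℝ) (q : Fin nφ → Fin m → ℝ) :
    expectedCost τ cF I π p q = ∑ φ, π φ * (p ⬝ᵥ (OmegaMat τ cF I φ *ᵥ q φ)) := by
  simp [expectedCost, toLinearMap₂'_apply']

theorem expectedCost_eq (hπ : ∑ φ, π φ = 1) (p : Fin m → ℝ) {q : Fin nφ → Fin m → ℝ}
    (hq : q ∈ attackProfiles nφ m) :
    expectedCost τ cF I π p q =
      (p ⬝ᵥ fun i => cF / τ i) + ∑ φ, π φ * ((p ᵥ* UpsilonMat I φ) ⬝ᵥ q φ) := by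
  simp only [expectedCost_apply, dotProduct_omegaMat_mulVec, (mem_attackProfiles.1 hq _).2, one_mul,
    mul_add, Finset.sum_add_distrib, ← Finset.sum_mul, hπ]

theorem expectedCost_const_single (hπ : ∑ φ, π φ = 1) (p : Fin m → ℝ) (j : Fin m) :
    expectedCost τ cF I π p (fun _ => Pi.single j 1) =
      (p ⬝ᵥ fun i => cF / τ i) + ∑ φ, π φ * (I φ j * tailMass p j) := by
  rw [expectedCost_eq τ cF I hπ p (const_mem_attackProfiles (single_mem_stdSimplex ℝ j))]
  simp [vecMul_upsilonMat]

theorem expectedCost_le (hπ0 : ∀ φ, 0 ≤ π φ) (hπ : ∑ φ, π φ = 1) (p : Fin m → ℝ)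
    {q : Fin nφ → Fin m → ℝ} (hq : q ∈ attackProfiles nφ m) {c : Fin nφ → ℝ}
    (hc : ∀ φ j, I φ j * tailMass p j ≤ c φ) :
    expectedCost τ cF I π p q ≤ (p ⬝ᵥ fun i => cF / τ i) + ∑ φ, π φ * c φ := by
  rw [expectedCost_eq τ cF I hπ p hq]
  simp only [vecMul_upsilonMat]
  gcongr with φ
  · exact hπ0 φ
  · exact dotProduct_le_of_forall_le (mem_attackProfiles.1 hq φ) (hc φ)

theorem expectedCost_update (p : Fin m → ℝ) (q : Fin nφ → Fin m → ℝ) (φ : Fin nφ)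
    (r : Fin m → ℝ) :
    expectedCost τ cF I π p (Function.update q φ r) =
      expectedCost τ cF I π p q + π φ * (p ⬝ᵥ (OmegaMat τ cF I φ *ᵥ (r - q φ))) := by
  rw [← sub_eq_iff_eq_add', expectedCost_apply, expectedCost_apply, ← Finset.sum_sub_distrib,
    Finset.sum_eq_single φ]
  · simp [mulVec_sub, dotProduct_sub, mul_sub]
  · intro ψ _ hψ
    simp [Function.update_of_ne hψ]
  · simp

end ExpectedCost

theorem exists_isSaddlePointOn_expectedCost [NeZero m] (τ : Fin m → ℝ) (cF : ℝ)
    (I : Fin nφ → Fin m → ℝ) (π : Fin nφ → ℝ) :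
    ∃ p ∈ stdSimplex ℝ (Fin m), ∃ q ∈ attackProfiles nφ m,
      IsSaddlePointOn (stdSimplex ℝ (Fin m)) (attackProfiles nφ m)
        (expectedCost τ cF I π · ·) p q :=
  (expectedCost τ cF I π).exists_isSaddlePointOn_of_isCompact
    ⟨_, single_mem_stdSimplex ℝ 0⟩ (convex_stdSimplex ℝ _) (isCompact_stdSimplex ℝ _)
    ⟨_, const_mem_attackProfiles (single_mem_stdSimplex ℝ 0)⟩
    (convex_pi fun _ _ => convex_stdSimplex ℝ _)
    (isCompact_univ_pi fun _ => isCompact_stdSimplex ℝ _)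

section Equilibrium

variable {τ : Fin m → ℝ} {cF : ℝ} {I : Fin nφ → Fin m → ℝ} {π : Fin nφ → ℝ}

theorem le_of_isBNE_of_forall_lt_one (hF : Antitone fun i => cF / τ i) (hπ0 : ∀ φ, 0 ≤ π φ)
    (hπ : ∑ φ, π φ = 1) (hmono : ∀ φ, Monotone (I φ)) {a b : Fin m} (hab : a ⋖ b) (hb : IsTop b)
    {p : Fin m → ℝ} {q : Fin nφ → Fin m → ℝ} (hpq : IsBNE τ cF I π p q) (hp1 : ∀ i, p i < 1) :
    cF / τ a ≤ cF / τ b + ∑ φ, π φ * I φ b := by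
  obtain ⟨hp, hq, hdef, hatt⟩ := hpq
  replace hq : q ∈ attackProfiles nφ m := mem_attackProfiles.2 hq
  set S := ∑ φ, π φ * I φ b
  have hdefb : expectedCost τ cF I π p q ≤ cF / τ b + S :=
    calc expectedCost τ cF I π p q ≤ expectedCost τ cF I π (Pi.single b 1) q := by
          simpa only [expectedCost_apply] using hdef _ (single_mem_stdSimplex ℝ b)
      _ ≤ (Pi.single b 1 ⬝ᵥ fun i => cF / τ i) + S :=
          expectedCost_le τ cF I hπ0 hπ _ hq fun φ j => by
            simpa [tailMass_single, hb j] using hmono φ (hb j)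
      _ = cF / τ b + S := by rw [single_dotProduct, one_mul]
  have hattb : (p ⬝ᵥ fun i => cF / τ i) + S * p b ≤ expectedCost τ cF I π p q := by
    rw [expectedCost_eq τ cF I hπ p hq, Finset.sum_mul]
    gcongr _ + ∑ φ, ?_ with φ
    rw [mul_assoc]
    refine mul_le_mul_of_nonneg_left ?_ (hπ0 φ)
    have := hatt φ _ (single_mem_stdSimplex ℝ b)
    rw [dotProduct_mulVec, dotProduct_mulVec, dotProduct_single, mul_one] at this
    simpa [vecMul_upsilonMat, tailMass_of_isTop hb] using this
  have hfalse : p b * (cF / τ b) + (1 - p b) * (cF / τ a) ≤ p ⬝ᵥ fun i => cF / τ i :=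
    add_mul_le_dotProduct hp fun i hi => hF (hab.le_of_lt (lt_of_le_of_ne (hb i) hi))
  have hkey : (1 - p b) * (cF / τ a) ≤ (1 - p b) * (cF / τ b + S) := by linarith
  exact le_of_mul_le_mul_left hkey (sub_pos.2 (hp1 b))

theorem exists_isBNE_of_isSaddlePointOn [NeZero m] (hπ0 : ∀ φ, 0 ≤ π φ) {p : Fin m → ℝ}
    {q : Fin nφ → Fin m → ℝ} (hp : p ∈ stdSimplex ℝ (Fin m)) (hq : q ∈ attackProfiles nφ m)
    (h : IsSaddlePointOn (stdSimplex ℝ (Fin m)) (attackProfiles nφ m)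
      (expectedCost τ cF I π · ·) p q) :
    ∃ q', IsBNE τ cF I π p q' := by
  classical
  choose r hr using fun φ => Finite.exists_max (p ᵥ* UpsilonMat I φ)
  -- types of prior zero do not affect the defender's cost, so they may play a pure best response
  set q' : Fin nφ → Fin m → ℝ := fun φ => if π φ = 0 then Pi.single (r φ) 1 else q φ
  have hq' : ∀ φ, q' φ ∈ stdSimplex ℝ (Fin m) := fun φ => by
    by_cases hφ : π φ = 0
    · simpa [q', hφ] using single_mem_stdSimplex ℝ (r φ)
    · simpa [q', hφ] using mem_attackProfiles.1 hq φ
  have hcost : ∀ x, expectedCost τ cF I π x q' = expectedCost τ cF I π x q := fun x => by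
    simp only [expectedCost_apply]
    refine Finset.sum_congr rfl fun φ _ => ?_
    by_cases hφ : π φ = 0 <;> simp [q', hφ]
  refine ⟨q', hp, hq', fun x hx => ?_, fun φ r' hr' => ?_⟩
  · simpa only [← expectedCost_apply, hcost] using h x hx q hq
  rw [dotProduct_mulVec, dotProduct_mulVec]
  by_cases hφ : π φ = 0
  · simpa [q', hφ] using dotProduct_le_of_forall_le hr' (hr φ)
  · have hupd : expectedCost τ cF I π p (Function.update q φ r') ≤ expectedCost τ cF I π p q :=
      h p hp _ <| mem_attackProfiles.2 fun ψ => by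
        rcases eq_or_ne ψ φ with rfl | hψ
        · rw [Function.update_self]; exact hr'
        · rw [Function.update_of_ne hψ]; exact mem_attackProfiles.1 hq ψ
    rw [expectedCost_update, add_le_iff_nonpos_right, dotProduct_omegaMat_mulVec] at hupd
    have hsum : ∑ j, (r' - q φ) j = 0 := by
      simp [Finset.sum_sub_distrib, hr'.2, (mem_attackProfiles.1 hq φ).2]
    rw [hsum, zero_mul, zero_add, dotProduct_sub] at hupd
    simpa [q', hφ] using
      sub_nonpos.1 (nonpos_of_mul_nonpos_right hupd (lt_of_le_of_ne (hπ0 φ) (Ne.symm hφ)))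

theorem not_isSaddlePointOn_single (hF : StrictAnti fun i => cF / τ i) (hπ0 : ∀ φ, 0 ≤ π φ)
    (hπ : ∑ φ, π φ = 1) (hmono : ∀ φ, Monotone (I φ)) {i k : Fin m} (hik : i < k) (hk : IsTop k)
    (hI : ∀ φ, 0 < I φ i ∨ I φ i = 0 ∧ I φ k = 0) {q : Fin nφ → Fin m → ℝ}
    (hq : q ∈ attackProfiles nφ m) :
    ¬ IsSaddlePointOn (stdSimplex ℝ (Fin m)) (attackProfiles nφ m) (expectedCost τ cF I π · ·)
      (Pi.single i 1) q := by
  intro h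
  obtain ⟨s, hs, hsI⟩ := exists_mem_Ioo_mul_le hI
  have hpure : expectedCost τ cF I π (Pi.single i 1) (fun _ => Pi.single i 1) =
      cF / τ i + ∑ φ, π φ * I φ i := by
    simp [expectedCost_const_single τ cF I hπ, tailMass_single]
  have hmix : expectedCost τ cF I π ((1 - s) • Pi.single i 1 + s • Pi.single k 1) q ≤
      (1 - s) * (cF / τ i) + s * (cF / τ k) + ∑ φ, π φ * I φ i := by
    simpa [add_dotProduct, smul_dotProduct, single_dotProduct] using
      expectedCost_le τ cF I hπ0 hπ _ hq (c := fun φ => I φ i) fun φ j =>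
        (mul_tailMass_le_max (hmono φ) hk hs.1.le j).trans (max_le le_rfl (hsI φ))
  have hsaddle := h _ (two_point_mem_stdSimplex i k (Ioo_subset_Icc_self hs)) _
    (const_mem_attackProfiles (single_mem_stdSimplex ℝ i))
  nlinarith [mul_pos hs.1 (sub_pos.2 (hF hik))]

theorem exists_isSaddlePointOn_two_point (hπ0 : ∀ φ, 0 ≤ π φ) (hπ : ∑ φ, π φ = 1)
    (hmono : ∀ φ, Monotone (I φ)) {a b : Fin m} (hb : IsTop b)
    (hI : ∀ φ, I φ a < I φ b ∨ I φ a = 0 ∧ I φ b = 0)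
    (hcond : cF / τ a ≤ cF / τ b + ∑ φ, π φ * I φ b) {q : Fin nφ → Fin m → ℝ}
    (h : IsSaddlePointOn (stdSimplex ℝ (Fin m)) (attackProfiles nφ m) (expectedCost τ cF I π · ·)
      (Pi.single b 1) q) :
    ∃ s ∈ Ioo (0 : ℝ) 1, IsSaddlePointOn (stdSimplex ℝ (Fin m)) (attackProfiles nφ m)
      (expectedCost τ cF I π · ·) ((1 - s) • Pi.single a 1 + s • Pi.single b 1) q := by
  obtain ⟨s, hs, hsI⟩ := exists_mem_Ioo_le_mul hI
  refine ⟨s, hs, fun x hx y hy => ?_⟩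
  have hS : ∑ φ, π φ * (s * I φ b) = s * ∑ φ, π φ * I φ b := by
    rw [Finset.mul_sum]; exact Finset.sum_congr rfl fun φ _ => by ring
  calc expectedCost τ cF I π ((1 - s) • Pi.single a 1 + s • Pi.single b 1) y
      ≤ (1 - s) * (cF / τ a) + s * (cF / τ b) + s * ∑ φ, π φ * I φ b := by
        simpa [add_dotProduct, smul_dotProduct, single_dotProduct, hS] using
          expectedCost_le τ cF I hπ0 hπ _ hy (c := fun φ => s * I φ b) fun φ j =>
            (mul_tailMass_le_max (hmono φ) hb hs.1.le j).trans (max_le (hsI φ) le_rfl)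
    _ ≤ cF / τ b + ∑ φ, π φ * I φ b := by
        nlinarith [mul_le_mul_of_nonneg_left hcond (sub_nonneg.2 hs.2.le)]
    _ = expectedCost τ cF I π (Pi.single b 1) (fun _ => Pi.single b 1) := by
        simp [expectedCost_const_single τ cF I hπ, tailMass_single]
    _ ≤ expectedCost τ cF I π x q :=
        h x hx _ (const_mem_attackProfiles (single_mem_stdSimplex ℝ b))

theorem exists_isSaddlePointOn_forall_lt_one [NeZero m] (hF : StrictAnti fun i => cF / τ i)
    (hπ0 : ∀ φ, 0 ≤ π φ) (hπ : ∑ φ, π φ = 1)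
    (hI : ∀ φ, (∀ j, 0 < I φ j) ∧ StrictMono (I φ) ∨ ∀ j, I φ j = 0)
    {a b : Fin m} (hab : a ≠ b) (hb : IsTop b) (hcond : cF / τ a ≤ cF / τ b + ∑ φ, π φ * I φ b) :
    ∃ p ∈ stdSimplex ℝ (Fin m), ∃ q ∈ attackProfiles nφ m,
      IsSaddlePointOn (stdSimplex ℝ (Fin m)) (attackProfiles nφ m) (expectedCost τ cF I π · ·) p q ∧
        ∀ i, p i < 1 := by
  have hmono : ∀ φ, Monotone (I φ) := fun φ =>
    (hI φ).elim (·.2.monotone) fun h _ _ _ => by simp [h]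
  obtain ⟨p, hp, q, hq, h⟩ := exists_isSaddlePointOn_expectedCost τ cF I π
  by_cases hp1 : ∀ i, p i < 1
  · exact ⟨p, hp, q, hq, h, hp1⟩
  obtain ⟨i, hi⟩ := not_forall.1 hp1
  obtain rfl := eq_single_of_mem_stdSimplex hp (not_lt.1 hi)
  rcases eq_or_ne i b with rfl | hib
  · obtain ⟨s, hs, hsaddle⟩ := exists_isSaddlePointOn_two_point hπ0 hπ hmono hb
      (fun φ => (hI φ).imp (fun h => h.2 (lt_of_le_of_ne (hb a) hab)) fun h => ⟨h a, h i⟩) hcond h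
    exact ⟨_, two_point_mem_stdSimplex a i (Ioo_subset_Icc_self hs), q, hq, hsaddle,
      two_point_apply_lt_one hab hs⟩
  · exact absurd h (not_isSaddlePointOn_single hF hπ0 hπ hmono (lt_of_le_of_ne (hb i) hib) hb
      (fun φ => (hI φ).imp (fun h => h.1 i) fun h => ⟨h i, h b⟩) hq)

end Equilibrium

end Game

/-- Theorem 1: a moving target defense (a Bayesian Nash equilibrium in which every entry of
the defender's strategy is strictly less than one) exists if, and only if,
`c_F/τ_{m-1} ≤ c_F/τ_m + Σ_φ π_φ I_m^φ`. -/
theorem mtd_exists_iff (m nφ : ℕ) (hm : 2 ≤ m)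
    (τ : Fin m → ℝ) (hτmono : StrictMono τ) (hτ1 : 1 ≤ τ ⟨0, by omega⟩)
    (cF : ℝ) (hcF : 0 < cF)
    (π : Fin nφ → ℝ) (hπ0 : ∀ φ, 0 ≤ π φ) (hπ1 : ∑ φ, π φ = 1)
    (I : Fin nφ → Fin m → ℝ)
    (hI : ∀ φ, (0 < I φ ⟨0, by omega⟩ ∧ StrictMono (I φ)) ∨ (∀ j, I φ j = 0)) :
    (∃ (p : Fin m → ℝ) (q : Fin nφ → Fin m → ℝ), IsBNE τ cF I π p q ∧ ∀ i, p i < 1) ↔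
    cF / τ ⟨m - 2, by omega⟩ ≤
      cF / τ ⟨m - 1, by omega⟩ + ∑ φ, π φ * I φ ⟨m - 1, by omega⟩ := by
  have hbot : ∀ j : Fin m, (⟨0, by omega⟩ : Fin m) ≤ j := fun j => Nat.zero_le j
  have hb : IsTop (⟨m - 1, by omega⟩ : Fin m) := fun j => Nat.le_sub_one_of_lt j.isLt
  have hab : (⟨m - 2, by omega⟩ : Fin m) ⋖ ⟨m - 1, by omega⟩ := by
    rw [Fin.covBy_iff, Nat.covBy_iff_add_one_eq]; simp only; omega
  have hF : StrictAnti fun i => cF / τ i := fun i j hij =>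
    div_lt_div_of_pos_left hcF (one_pos.trans_le (hτ1.trans (hτmono.monotone (hbot i))))
      (hτmono hij)
  have hI' : ∀ φ, (∀ j, 0 < I φ j) ∧ StrictMono (I φ) ∨ ∀ j, I φ j = 0 := fun φ =>
    (hI φ).imp_left fun ⟨h0, hφ⟩ => ⟨fun j => h0.trans_le (hφ.monotone (hbot j)), hφ⟩
  constructor
  · rintro ⟨p, q, hpq, hp1⟩
    exact le_of_isBNE_of_forall_lt_one hF.antitone hπ0 hπ1
      (fun φ => (hI φ).elim (·.2.monotone) fun h _ _ _ => by simp [h]) hab hb hpq hp1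
  · intro hcond
    have : NeZero m := ⟨by omega⟩
    obtain ⟨p, hp, q, hq, h, hp1⟩ :=
      exists_isSaddlePointOn_forall_lt_one hF hπ0 hπ1 hI' hab.ne hb hcond
    obtain ⟨q', hq'⟩ := exists_isBNE_of_isSaddlePointOn hπ0 hp hq h
    exact ⟨p, q', hq', hp1⟩
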